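/- arXiv:2509.10473 — 3 statements merged into one kernel-verified Lean document; each statement's English description precedes it below -/
import Mathlib

section
/- Let G and H be connected bipartite graphs with bipartitions V(G) = A_G ∪ B_G, V(H) = A_H ∪ B_H, where |A_G| ≤ |B_G| and |A_H| ≤ |B_H|, with no isolated vertices. If (1 + |B_G|/|A_G|)·(1 + |B_H|/|A_H|) ≥ Δ(G) + Δ(H) + 1, then γ(G □ H) ≥ γ(G)·γ(H). -/
/-!
In a bipartite graph without isolated vertices either side dominates, so
`γ(G) γ(H) ≤ |A_G| |A_H|`. On the other hand every vertex of `G □ H` dominates at most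
`Δ(G) + Δ(H) + 1` vertices, so `|V(G)| |V(H)| ≤ γ(G □ H) (Δ(G) + Δ(H) + 1)`. The hypothesis
says exactly that `(Δ(G) + Δ(H) + 1) |A_G| |A_H| ≤ |V(G)| |V(H)|`.
-/

def IsDominatingSet {V : Type*} (G : SimpleGraph V) (D : Set V) : Prop :=
  ∀ v, v ∈ D ∨ ∃ u ∈ D, G.Adj u v

noncomputable def domNum {V : Type*} (G : SimpleGraph V) [Fintype V] : ℕ :=
  sInf {n | ∃ D : Finset V, IsDominatingSet G ↑D ∧ D.card = n}

noncomputable def maxDeg {V : Type*} (G : SimpleGraph V) [Fintype V] : ℕ :=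
  Finset.univ.sup fun v => (G.neighborSet v).ncard

def IsBipartition {V : Type*} (G : SimpleGraph V) (A B : Finset V) : Prop :=
  Disjoint A B ∧ (∀ v, v ∈ A ∨ v ∈ B) ∧
    ∀ u v, G.Adj u v → (u ∈ A ∧ v ∈ B) ∨ (u ∈ B ∧ v ∈ A)

open Finset SimpleGraph

section Domination

variable {V W : Type*} [Fintype V] [Fintype W]

lemma exists_isDominatingSet_card_eq_domNum (G : SimpleGraph V) :
    ∃ D : Finset V, IsDominatingSet G ↑D ∧ D.card = domNum G :=
  Nat.sInf_mem (s := {n | ∃ D : Finset V, IsDominatingSet G ↑D ∧ D.card = n})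
    ⟨_, univ, fun v => Or.inl (by simp), rfl⟩

lemma IsDominatingSet.domNum_le_card {G : SimpleGraph V} {D : Finset V}
    (hD : IsDominatingSet G ↑D) : domNum G ≤ D.card :=
  Nat.sInf_le ⟨D, hD, rfl⟩

lemma degree_le_maxDeg (G : SimpleGraph V) [DecidableRel G.Adj] (v : V) :
    G.degree v ≤ maxDeg G := by
  have hdeg : (G.neighborSet v).ncard = G.degree v := by
    rw [Set.ncard_eq_toFinset_card', ← card_neighborFinset_eq_degree, neighborFinset]
  rw [← hdeg]
  exact le_sup (f := fun v => (G.neighborSet v).ncard) (mem_univ v)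

lemma maxDeg_boxProd_le (G : SimpleGraph V) (H : SimpleGraph W) :
    maxDeg (G □ H) ≤ maxDeg G + maxDeg H := by
  classical
  refine Finset.sup_le fun x _ => ?_
  rw [Set.ncard_eq_toFinset_card', ← neighborFinset_def, card_neighborFinset_eq_degree,
    degree_boxProd]
  exact Nat.add_le_add (degree_le_maxDeg G x.1) (degree_le_maxDeg H x.2)

lemma card_le_domNum_mul_maxDeg_add_one (G : SimpleGraph V) :
    Fintype.card V ≤ domNum G * (maxDeg G + 1) := by
  classical
  obtain ⟨D, hD, hcard⟩ := exists_isDominatingSet_card_eq_domNum G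
  have hcover : (univ : Finset V) ⊆ D.biUnion fun u => insert u (G.neighborFinset u) := by
    intro v _
    rcases hD v with hv | ⟨u, hu, hadj⟩
    · exact mem_biUnion.2 ⟨v, by simpa using hv, mem_insert_self _ _⟩
    · exact mem_biUnion.2
        ⟨u, by simpa using hu, mem_insert_of_mem ((mem_neighborFinset _ _ _).2 hadj)⟩
  calc Fintype.card V ≤ (D.biUnion fun u => insert u (G.neighborFinset u)).card :=
        card_univ (α := V) ▸ card_le_card hcover
    _ ≤ ∑ u ∈ D, (insert u (G.neighborFinset u)).card := card_biUnion_le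
    _ ≤ ∑ _u ∈ D, (maxDeg G + 1) := sum_le_sum fun u _ =>
        (card_insert_le _ _).trans (Nat.add_le_add_right (degree_le_maxDeg G u) 1)
    _ = domNum G * (maxDeg G + 1) := by rw [sum_const, smul_eq_mul, hcard]

end Domination

namespace IsBipartition

variable {V : Type*} {G : SimpleGraph V} {A B : Finset V}

lemma isDominatingSet_left (hbip : IsBipartition G A B) (hiso : ∀ v, ∃ u, G.Adj v u) :
    IsDominatingSet G ↑A := by
  intro v
  rcases hbip.2.1 v with hA | hB
  · exact Or.inl hA
  · obtain ⟨u, hadj⟩ := hiso v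
    rcases hbip.2.2 v u hadj with ⟨hA, -⟩ | ⟨-, hu⟩
    · exact absurd hA (disjoint_right.1 hbip.1 hB)
    · exact Or.inr ⟨u, hu, hadj.symm⟩

lemma card_add_card [Fintype V] (hbip : IsBipartition G A B) :
    A.card + B.card = Fintype.card V := by
  classical
  rw [← card_union_of_disjoint hbip.1, ← card_univ]
  exact congrArg card (eq_univ_iff_forall.2 fun v => mem_union.2 (hbip.2.1 v))

end IsBipartition

lemma mul_mul_le_of_le_one_add_div_mul_one_add_div {a b c d s : ℕ}
    (h : (s : ℚ) ≤ (1 + (b : ℚ) / a) * (1 + (d : ℚ) / c)) :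
    s * (a * c) ≤ (a + b) * (c + d) := by
  rcases Nat.eq_zero_or_pos a with rfl | ha
  · simp
  rcases Nat.eq_zero_or_pos c with rfl | hc
  · simp
  have hac : (0 : ℚ) < a * c := by positivity
  have hrw : (1 + (b : ℚ) / a) * (1 + (d : ℚ) / c) = (a + b) * (c + d) / (a * c) := by
    field_simp
  rw [hrw, le_div_iff₀ hac] at h
  exact_mod_cast h

theorem stmt4_general {V W : Type*} [Fintype V] [Fintype W]
    (G : SimpleGraph V) (H : SimpleGraph W)
    (AG BG : Finset V) (AH BH : Finset W)
    (hGbip : IsBipartition G AG BG) (hHbip : IsBipartition H AH BH)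
    (hGiso : ∀ v : V, ∃ u, G.Adj v u) (hHiso : ∀ v : W, ∃ u, H.Adj v u)
    (hcond : ((1 : ℚ) + (BG.card : ℚ) / AG.card) * (1 + (BH.card : ℚ) / AH.card) ≥
      (maxDeg G : ℚ) + maxDeg H + 1) :
    domNum (G □ H) ≥ domNum G * domNum H := by
  set S := maxDeg G + maxDeg H + 1
  have hsides : S * (AG.card * AH.card) ≤ (AG.card + BG.card) * (AH.card + BH.card) :=
    mul_mul_le_of_le_one_add_div_mul_one_add_div (by push_cast [S]; exact hcond)
  have hbox : Fintype.card (V × W) ≤ domNum (G □ H) * S :=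
    (card_le_domNum_mul_maxDeg_add_one (G □ H)).trans
      (Nat.mul_le_mul_left _ (Nat.add_le_add_right (maxDeg_boxProd_le G H) 1))
  refine Nat.le_of_mul_le_mul_left ?_ (Nat.succ_pos _ : 0 < S)
  calc S * (domNum G * domNum H) ≤ S * (AG.card * AH.card) :=
        Nat.mul_le_mul_left S (Nat.mul_le_mul
          (hGbip.isDominatingSet_left hGiso).domNum_le_card
          (hHbip.isDominatingSet_left hHiso).domNum_le_card)
    _ ≤ (AG.card + BG.card) * (AH.card + BH.card) := hsides
    _ = Fintype.card (V × W) := by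
        rw [Fintype.card_prod, hGbip.card_add_card, hHbip.card_add_card]
    _ ≤ domNum (G □ H) * S := hbox
    _ = S * domNum (G □ H) := Nat.mul_comm _ _

theorem stmt4 {V W : Type*} [Fintype V] [Fintype W]
    (G : SimpleGraph V) (H : SimpleGraph W)
    (AG BG : Finset V) (AH BH : Finset W)
    (hGconn : G.Connected) (hHconn : H.Connected)
    (hGbip : IsBipartition G AG BG) (hHbip : IsBipartition H AH BH)
    (hGle : AG.card ≤ BG.card) (hHle : AH.card ≤ BH.card)
    (hGiso : ∀ v : V, ∃ u, G.Adj v u) (hHiso : ∀ v : W, ∃ u, H.Adj v u)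
    (hcond : ((1 : ℚ) + (BG.card : ℚ) / AG.card) * (1 + (BH.card : ℚ) / AH.card) ≥
      (maxDeg G : ℚ) + maxDeg H + 1) :
    domNum (G □ H) ≥ domNum G * domNum H :=
  stmt4_general G H AG BG AH BH hGbip hHbip hGiso hHiso hcond
end

section
/- Let G and H be k-regular bipartite graphs with balanced parts of sizes n_G and n_H respectively, with k ≥ 1, n_G ≥ k, n_H ≥ k. Suppose γ(G) ≤ 2⌈n_G/k⌉ and γ(H) ≤ 2⌈n_H/k⌉. If 1/(2k+1) ≥ (1/k + 1/n_G)·(1/k + 1/n_H), then γ(G □ H) ≥ γ(G)·γ(H). -/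
/-- Every vertex has degree exactly `k`. -/
def IsRegularOfDeg {V : Type*} (G : SimpleGraph V) (k : ℕ) : Prop :=
  ∀ v, (G.neighborSet v).ncard = k

/-!
A vertex of `G □ H` dominates at most `2k + 1` of the `4 n_G n_H` vertices, so
`γ(G □ H) ≥ 4 n_G n_H / (2k + 1)`. On the other side `⌈n/k⌉ ≤ n (1/k + 1/n)`, so the
hypotheses give `γ(G) γ(H) ≤ 4 n_G n_H (1/k + 1/n_G)(1/k + 1/n_H) ≤ 4 n_G n_H / (2k + 1)`.
-/

open Finset

namespace SimpleGraph

variable {V W : Type*} [Fintype V] [Fintype W]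

lemma exists_isDominatingSet_card_eq_domNum (G : SimpleGraph V) :
    ∃ D : Finset V, IsDominatingSet G ↑D ∧ D.card = domNum G :=
  Nat.sInf_mem (s := {n | ∃ D : Finset V, IsDominatingSet G ↑D ∧ D.card = n})
    ⟨_, univ, fun v => Or.inl (mem_coe.2 (mem_univ v)), rfl⟩

lemma card_le_card_mul_of_isDominatingSet (G : SimpleGraph V) {d : ℕ}
    (hdeg : ∀ v, (G.neighborSet v).ncard ≤ d) {D : Finset V} (hD : IsDominatingSet G ↑D) :
    Fintype.card V ≤ D.card * (d + 1) := by
  classical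
  have hcover : (univ : Finset V) ⊆ D.biUnion fun u => insert u (G.neighborSet u).toFinset := by
    intro v _
    rcases hD v with hv | ⟨u, hu, huv⟩
    · exact mem_biUnion.2 ⟨v, hv, mem_insert_self _ _⟩
    · exact mem_biUnion.2 ⟨u, hu, mem_insert_of_mem (by simpa using huv)⟩
  have hball (u : V) : (insert u (G.neighborSet u).toFinset).card ≤ d + 1 :=
    (card_insert_le _ _).trans <| by
      rw [← Set.ncard_eq_toFinset_card']
      exact Nat.succ_le_succ (hdeg u)
  calc Fintype.card V ≤ (D.biUnion fun u => insert u (G.neighborSet u).toFinset).card :=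
        card_le_card hcover
    _ ≤ ∑ u ∈ D, (insert u (G.neighborSet u).toFinset).card := card_biUnion_le
    _ ≤ ∑ _u ∈ D, (d + 1) := sum_le_sum fun u _ => hball u
    _ = D.card * (d + 1) := by rw [sum_const, smul_eq_mul]

lemma card_le_domNum_mul (G : SimpleGraph V) {d : ℕ}
    (hdeg : ∀ v, (G.neighborSet v).ncard ≤ d) :
    Fintype.card V ≤ domNum G * (d + 1) := by
  obtain ⟨D, hD, hcard⟩ := G.exists_isDominatingSet_card_eq_domNum
  exact hcard ▸ G.card_le_card_mul_of_isDominatingSet hdeg hD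

lemma ncard_neighborSet_eq_degree (G : SimpleGraph V) [DecidableRel G.Adj] (v : V) :
    (G.neighborSet v).ncard = G.degree v := by
  rw [← Nat.card_coe_set_eq, Nat.card_eq_fintype_card, card_neighborSet_eq_degree]

lemma _root_.IsRegularOfDeg.boxProd {G : SimpleGraph V} {H : SimpleGraph W} {k l : ℕ}
    (hG : IsRegularOfDeg G k) (hH : IsRegularOfDeg H l) : IsRegularOfDeg (G □ H) (k + l) := by
  classical
  intro x
  rw [ncard_neighborSet_eq_degree, degree_boxProd, ← ncard_neighborSet_eq_degree,
    ← ncard_neighborSet_eq_degree, hG, hH]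

lemma _root_.IsBipartition.card_eq {G : SimpleGraph V} {A B : Finset V} (h : IsBipartition G A B) :
    Fintype.card V = A.card + B.card := by
  classical
  have hunion : A ∪ B = univ := eq_univ_of_forall fun v => mem_union.2 (h.2.1 v)
  rw [← card_union_of_disjoint h.1, hunion, card_univ]

end SimpleGraph

/-- The cases `n = 0` and `k = 0` hold through `1 / 0 = 0`. -/
lemma Nat.ceil_div_le_mul_one_div_add_one_div (n k : ℕ) :
    (⌈(n : ℚ) / k⌉₊ : ℚ) ≤ n * (1 / k + 1 / n) := by
  rcases Nat.eq_zero_or_pos n with rfl | hn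
  · simp
  rcases Nat.eq_zero_or_pos k with rfl | hk
  · simp [hn.ne']
  have hn' : (n : ℚ) ≠ 0 := by positivity
  calc (⌈(n : ℚ) / k⌉₊ : ℚ) ≤ n / k + 1 := (Nat.ceil_lt_add_one (by positivity)).le
    _ = n * (1 / k + 1 / n) := by field_simp

theorem stmt7_general {V W : Type*} [Fintype V] [Fintype W]
    (G : SimpleGraph V) (H : SimpleGraph W) (k nG nH : ℕ)
    (AG BG : Finset V) (AH BH : Finset W)
    (hGbip : IsBipartition G AG BG) (hHbip : IsBipartition H AH BH)
    (hGreg : IsRegularOfDeg G k) (hHreg : IsRegularOfDeg H k)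
    (hAG : AG.card = nG) (hBG : BG.card = nG)
    (hAH : AH.card = nH) (hBH : BH.card = nH)
    (hγG : domNum G ≤ 2 * Nat.ceil ((nG : ℚ) / k))
    (hγH : domNum H ≤ 2 * Nat.ceil ((nH : ℚ) / k))
    (hcond : (1 : ℚ) / (2 * k + 1) ≥
      ((1 : ℚ) / k + 1 / nG) * ((1 : ℚ) / k + 1 / nH)) :
    domNum (G □ H) ≥ domNum G * domNum H := by
  have hcount : (2 * nG) * (2 * nH) ≤ domNum (G □ H) * (2 * k + 1) := by
    have := (G □ H).card_le_domNum_mul fun x => ((hGreg.boxProd hHreg) x).le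
    rw [Fintype.card_prod, hGbip.card_eq, hHbip.card_eq, hAG, hBG, hAH, hBH] at this
    linarith
  have hγG' : (domNum G : ℚ) ≤ 2 * (nG * (1 / k + 1 / nG)) := calc
      (domNum G : ℚ) ≤ 2 * ⌈(nG : ℚ) / k⌉₊ := by exact_mod_cast hγG
      _ ≤ _ := by gcongr; exact Nat.ceil_div_le_mul_one_div_add_one_div nG k
  have hγH' : (domNum H : ℚ) ≤ 2 * (nH * (1 / k + 1 / nH)) := calc
      (domNum H : ℚ) ≤ 2 * ⌈(nH : ℚ) / k⌉₊ := by exact_mod_cast hγH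
      _ ≤ _ := by gcongr; exact Nat.ceil_div_le_mul_one_div_add_one_div nH k
  have key : (domNum G * domNum H : ℚ) ≤ domNum (G □ H) := calc
      (domNum G * domNum H : ℚ) ≤ 2 * (nG * (1 / k + 1 / nG)) * (2 * (nH * (1 / k + 1 / nH))) :=
        mul_le_mul hγG' hγH' (by positivity) (by positivity)
      _ = 2 * nG * (2 * nH) * ((1 / k + 1 / nG) * (1 / k + 1 / nH)) := by ring
      _ ≤ 2 * nG * (2 * nH) * (1 / (2 * k + 1)) := by gcongr
      _ ≤ domNum (G □ H) := by
        rw [mul_one_div, div_le_iff₀ (by positivity)]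
        exact_mod_cast hcount
  exact_mod_cast key

theorem stmt7 {V W : Type*} [Fintype V] [Fintype W]
    (G : SimpleGraph V) (H : SimpleGraph W) (k nG nH : ℕ)
    (AG BG : Finset V) (AH BH : Finset W)
    (hGbip : IsBipartition G AG BG) (hHbip : IsBipartition H AH BH)
    (hGreg : IsRegularOfDeg G k) (hHreg : IsRegularOfDeg H k)
    (hAG : AG.card = nG) (hBG : BG.card = nG)
    (hAH : AH.card = nH) (hBH : BH.card = nH)
    (hk : 1 ≤ k) (hnG : k ≤ nG) (hnH : k ≤ nH)
    (hγG : domNum G ≤ 2 * Nat.ceil ((nG : ℚ) / k))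
    (hγH : domNum H ≤ 2 * Nat.ceil ((nH : ℚ) / k))
    (hcond : (1 : ℚ) / (2 * k + 1) ≥
      ((1 : ℚ) / k + 1 / nG) * ((1 : ℚ) / k + 1 / nH)) :
    domNum (G □ H) ≥ domNum G * domNum H :=
  stmt7_general G H k nG nH AG BG AH BH hGbip hHbip hGreg hHreg hAG hBG hAH hBH hγG hγH hcond
end

section
/- Let G be a k-regular bipartite graph with parts A, B, |A| = |B| = n = k + 2 ≥ 4, and suppose that for every a ∈ A with non-neighbors {b₁, b₂} ⊆ B we have N(b₁) = N(b₂). Then every vertex b ∈ B has exactly one other vertex b' ∈ B with N(b) = N(b'), and the non-edges of G form a disjoint union of n/2 complete bipartite graphs K_{2,2}; in particular n is even. -/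
/-!
If `a ∈ A` is not adjacent to `b ∈ B`, the hypothesis makes every non-neighbour of `a` a twin of
`b`, and conversely every twin of `b` misses `a`. So the twin class of `b` in `B` is the set of
the `n - k = 2` non-neighbours of `a`: twin classes are pairs, which gives the unique twin, the
`K_{2,2}` structure of the non-edges, and `2 ∣ |B| = n`.
-/

open Finset

namespace Finset

variable {α β : Type*}

theorem existsUnique_ne_of_card_eq_two [DecidableEq α] {s : Finset α} {a : α} (hs : #s = 2)
    (ha : a ∈ s) : ∃! b, b ∈ s ∧ b ≠ a := by
  obtain ⟨x, y, hxy, rfl⟩ := card_eq_two.mp hs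
  rcases mem_insert.mp ha with rfl | ha
  · exact ⟨y, by simp [hxy.symm], by simp +contextual⟩
  · rw [mem_singleton.mp ha]
    exact ⟨x, by simp [hxy], by simp +contextual⟩

theorem dvd_card_of_card_fiber_eq [DecidableEq β] {s : Finset α} {f : α → β} {m : ℕ}
    (h : ∀ a ∈ s, #{x ∈ s | f x = f a} = m) : m ∣ #s := by
  have hfib : ∀ b ∈ s.image f, #{x ∈ s | f x = b} = m := by
    simp only [mem_image, forall_exists_index, and_imp]
    rintro _ a ha rfl
    exact h a ha
  rw [card_eq_sum_card_image f s, sum_const_nat hfib]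
  exact dvd_mul_left m _

end Finset

section

variable {V : Type*} {G : SimpleGraph V} {A B : Finset V}

theorem IsBipartition.symm (h : IsBipartition G A B) : IsBipartition G B A := by
  obtain ⟨hdisj, hcover, hadj⟩ := h
  exact ⟨hdisj.symm, fun v => (hcover v).symm, fun u v huv => (hadj u v huv).symm⟩

theorem IsBipartition.mem_right_of_adj (h : IsBipartition G A B) {a v : V} (ha : a ∈ A)
    (hav : G.Adj a v) : v ∈ B := by
  rcases h.2.2 a v hav with ⟨_, hv⟩ | ⟨haB, _⟩
  · exact hv
  · exact absurd haB (disjoint_left.mp h.1 ha)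

theorem IsRegularOfDeg.card_filter_not_adj [DecidableRel G.Adj] {k : ℕ}
    (hreg : IsRegularOfDeg G k) {S : Finset V} {x : V} (hS : ∀ v, G.Adj x v → v ∈ S) :
    #{v ∈ S | ¬ G.Adj x v} = #S - k := by
  have hnbr : G.neighborSet x = ↑({v ∈ S | G.Adj x v} : Finset V) := by
    ext v
    simpa using fun hv => hS v hv
  have hk : #{v ∈ S | G.Adj x v} = k := by rw [← hreg x, hnbr, Set.ncard_coe_finset]
  have := card_filter_add_card_filter_not (s := S) (fun v => G.Adj x v)
  omega

theorem IsBipartition.card_filter_not_adj [DecidableRel G.Adj] {k : ℕ}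
    (hbip : IsBipartition G A B) (hreg : IsRegularOfDeg G k) {a : V} (ha : a ∈ A) :
    #{v ∈ B | ¬ G.Adj a v} = #B - k :=
  hreg.card_filter_not_adj fun _ => hbip.mem_right_of_adj ha

def NonNeighborsAreTwins (G : SimpleGraph V) (A B : Finset V) : Prop :=
  ∀ a ∈ A, ∀ b₁ ∈ B, ∀ b₂ ∈ B, b₁ ≠ b₂ →
    ¬ G.Adj a b₁ → ¬ G.Adj a b₂ → G.neighborSet b₁ = G.neighborSet b₂

namespace NonNeighborsAreTwins

theorem not_adj (h : NonNeighborsAreTwins G A B) {a a' b b' : V} (ha : a ∈ A) (hb : b ∈ B)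
    (hb' : b' ∈ B) (hab : ¬ G.Adj a b) (ha'b : ¬ G.Adj a' b) (hab' : ¬ G.Adj a b') :
    ¬ G.Adj a' b' := by
  rcases eq_or_ne b b' with rfl | hne
  · exact ha'b
  · have hN := h a ha b hb b' hb' hne hab hab'
    intro ha'b'
    exact ha'b (G.adj_symm (hN ▸ G.adj_symm ha'b' : a' ∈ G.neighborSet b))

theorem filter_neighborSet_eq [DecidableRel G.Adj] [DecidableEq (Set V)]
    (h : NonNeighborsAreTwins G A B) {a b : V} (ha : a ∈ A) (hb : b ∈ B) (hab : ¬ G.Adj a b) :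
    ({c ∈ B | G.neighborSet c = G.neighborSet b} : Finset V) = {c ∈ B | ¬ G.Adj a c} := by
  ext c
  simp only [mem_filter, and_congr_right_iff]
  intro hc
  constructor
  · intro hN hac
    exact hab (G.adj_symm (hN ▸ G.adj_symm hac : a ∈ G.neighborSet b))
  · intro hac
    rcases eq_or_ne c b with rfl | hne
    · rfl
    · exact h a ha c hc b hb hne hac hab

end NonNeighborsAreTwins

end

theorem stmt14_general {V : Type*} (G : SimpleGraph V) (A B : Finset V) (k n : ℕ)
    (hbip : IsBipartition G A B) (hreg : IsRegularOfDeg G k)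
    (hA : A.card = n) (hB : B.card = n) (hn : n = k + 2)
    (hyp : ∀ a ∈ A, ∀ b₁ ∈ B, ∀ b₂ ∈ B, b₁ ≠ b₂ →
      ¬ G.Adj a b₁ → ¬ G.Adj a b₂ → G.neighborSet b₁ = G.neighborSet b₂) :
    (∀ b ∈ B, ∃! b', b' ∈ B ∧ b' ≠ b ∧ G.neighborSet b' = G.neighborSet b) ∧
    (∀ a ∈ A, ∀ b ∈ B, ∀ a' ∈ A, ∀ b' ∈ B,
      ¬ G.Adj a b → ¬ G.Adj a' b → ¬ G.Adj a b' → ¬ G.Adj a' b') ∧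
    Even n := by
  classical
  have htwins : NonNeighborsAreTwins G A B := hyp
  have hclass : ∀ b ∈ B, #{c ∈ B | G.neighborSet c = G.neighborSet b} = 2 := by
    intro b hb
    have hpos : 0 < #{v ∈ A | ¬ G.Adj b v} := by
      rw [hbip.symm.card_filter_not_adj hreg hb]
      omega
    obtain ⟨a, hav⟩ := card_pos.mp hpos
    obtain ⟨ha, hba⟩ := mem_filter.mp hav
    rw [htwins.filter_neighborSet_eq ha hb (fun hab => hba hab.symm),
      hbip.card_filter_not_adj hreg ha]
    omega
  refine ⟨fun b hb => ?_, fun a ha b hb _ _ b' hb' => htwins.not_adj ha hb hb', ?_⟩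
  · simpa [and_assoc, and_comm, and_left_comm] using
      existsUnique_ne_of_card_eq_two (hclass b hb) (mem_filter.mpr ⟨hb, rfl⟩)
  · rw [← hB, even_iff_two_dvd]
    exact dvd_card_of_card_fiber_eq hclass

theorem stmt14 {V : Type*} [Fintype V] (G : SimpleGraph V) (A B : Finset V) (k n : ℕ)
    (hbip : IsBipartition G A B) (hreg : IsRegularOfDeg G k)
    (hA : A.card = n) (hB : B.card = n) (hn : n = k + 2) (hn4 : 4 ≤ n)
    (hyp : ∀ a ∈ A, ∀ b₁ ∈ B, ∀ b₂ ∈ B, b₁ ≠ b₂ →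
      ¬ G.Adj a b₁ → ¬ G.Adj a b₂ → G.neighborSet b₁ = G.neighborSet b₂) :
    (∀ b ∈ B, ∃! b', b' ∈ B ∧ b' ≠ b ∧ G.neighborSet b' = G.neighborSet b) ∧
    (∀ a ∈ A, ∀ b ∈ B, ∀ a' ∈ A, ∀ b' ∈ B,
      ¬ G.Adj a b → ¬ G.Adj a' b → ¬ G.Adj a b' → ¬ G.Adj a' b') ∧
    Even n :=
  stmt14_general G A B k n hbip hreg hA hB hn hyp
end
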